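/- arXiv:2401.07857 — 4 statements merged into one kernel-verified Lean document; each statement's English description precedes it below -/
import Mathlib

section
/- Let Φ1 be a state, let M be a move of type 1, 2 or 3 that is valid for Φ1, and suppose the type 2 move T2^i is valid for M(Φ1). Then T2^i is valid for Φ1, M is valid for T2^i(Φ1), and M(T2^i(Φ1)) = T2^i(M(Φ1)). -/
namespace CPaper


/-- The six types of moves on states (all indices 0-based). -/
inductive Move where
  | t1 (d : ℕ)
  | t2 (i : ℕ)
  | t3 (i j : ℕ)
  | t4 (i j : ℕ)
  | t5 (i j : ℕ)
  | t6 (i j : ℕ)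

/-- A state is a list of tuples of integers. -/
abbrev State := List (List ℤ)

/-- A genuine state: at least one tuple, and all tuples nonempty. -/
def IsState (Φ : State) : Prop := Φ ≠ [] ∧ ∀ t ∈ Φ, t ≠ []

/-- The entries of a state, read in order (flattened). -/
def entries (Φ : State) : List ℤ := Φ.flatten

/-- The number of positions of a state. -/
def numPos (Φ : State) : ℕ := (entries Φ).length

/-- The value at the (0-based) position `i` of the state `Φ`. -/
def entry (Φ : State) (i : ℕ) : ℤ := (entries Φ).getD i 0

/-- The (0-based) index of the tuple containing the flat position `i`. -/
def tupleIdx : State → ℕ → ℕ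
  | [], _ => 0
  | t :: ts, i => if i < t.length then 0 else tupleIdx ts (i - t.length) + 1

/-- Positions `i` and `j` lie in the same tuple of `Φ`. -/
def SameTuple (Φ : State) (i j : ℕ) : Prop := tupleIdx Φ i = tupleIdx Φ j

/-- Position `i` is dominant in `Φ`: its value bounds the absolute value of
every entry of the tuple containing it. -/
def DominantAt (Φ : State) (i : ℕ) : Prop :=
  ∀ k, k < numPos Φ → SameTuple Φ i k → |entry Φ k| ≤ entry Φ i

/-- Apply `f` at flat position `i`, preserving the tuple structure. -/
def modifyFlat (f : ℤ → ℤ) : ℕ → State → State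
  | _, [] => []
  | i, t :: ts =>
    if i < t.length then (t.take i ++ f (t.getD i 0) :: t.drop (i + 1)) :: ts
    else t :: modifyFlat f (i - t.length) ts

/-- Concatenate the `d`-th and `(d+1)`-th tuples of `Φ` (0-based). -/
def joinAt (Φ : State) (d : ℕ) : State :=
  Φ.take d ++ (Φ.getD d [] ++ Φ.getD (d + 1) []) :: Φ.drop (d + 2)

/-- The action of a move on a state. -/
def Move.apply : Move → State → State
  | .t1 d, Φ => joinAt Φ d
  | .t2 i, Φ => modifyFlat (· + 1) i Φ
  | .t3 i j, Φ => modifyFlat (· - 1) j (modifyFlat (· + 1) i Φ)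
  | .t4 i j, Φ => modifyFlat (· - 1) j (modifyFlat (· + 1) i Φ)
  | .t5 i j, Φ => modifyFlat (· + 1) j (modifyFlat (· + 1) i Φ)
  | .t6 i j, Φ => modifyFlat (· + 1) j (modifyFlat (· + 1) i Φ)

/-- A move is admissible for `Φ` when its indices are within bounds. -/
def Move.Admissible : Move → State → Prop
  | .t1 d, Φ => d + 1 < Φ.length
  | .t2 i, Φ => i < numPos Φ
  | .t3 i j, Φ => i < numPos Φ ∧ j < numPos Φ ∧ i ≠ j
  | .t4 i j, Φ => i < numPos Φ ∧ j < numPos Φ ∧ i ≠ j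
  | .t5 i j, Φ => i < numPos Φ ∧ j < numPos Φ ∧ i ≠ j
  | .t6 i j, Φ => i < numPos Φ ∧ j < numPos Φ ∧ i ≠ j

/-- Validity of a move for a state. -/
def Move.Valid : Move → State → Prop
  | .t1 d, Φ => d + 1 < Φ.length
  | .t2 i, Φ => i < numPos Φ ∧ DominantAt Φ i
  | .t3 i j, Φ =>
      i < numPos Φ ∧ j < numPos Φ ∧ i ≠ j ∧ SameTuple Φ i j ∧ DominantAt Φ i ∧ entry Φ j ≤ 0
  | .t4 i j, Φ =>
      i < numPos Φ ∧ j < numPos Φ ∧ i ≠ j ∧ SameTuple Φ i j ∧ DominantAt Φ i ∧ 0 < entry Φ j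
  | .t5 i j, Φ =>
      i < numPos Φ ∧ j < numPos Φ ∧ i ≠ j ∧ SameTuple Φ i j ∧ DominantAt Φ i ∧ entry Φ j < 0
  | .t6 i j, Φ =>
      i < numPos Φ ∧ j < numPos Φ ∧ i ≠ j ∧ SameTuple Φ i j ∧ DominantAt Φ i ∧ 0 ≤ entry Φ j

def Move.isType1 : Move → Prop
  | .t1 _ => True
  | _ => False

def Move.isType2 : Move → Prop
  | .t2 _ => True
  | _ => False

def Move.isType3 : Move → Prop
  | .t3 _ _ => True
  | _ => False

/-- The move is of one of the types 1, 2 or 3. -/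
def Move.isType123 : Move → Prop
  | .t1 _ => True
  | .t2 _ => True
  | .t3 _ _ => True
  | _ => False

/-- `ValidSeq ms Φ Ψ`: the list of moves `ms`, applied in order starting from `Φ`,
consists of valid moves and ends at `Ψ`. -/
def ValidSeq : List Move → State → State → Prop
  | [], Φ, Ψ => Φ = Ψ
  | m :: ms, Φ, Ψ => m.Valid Φ ∧ ValidSeq ms (m.apply Φ) Ψ

/-- A tuple of integers is C*_{Z,6}-realizable: the one-tuple state `[l]` is reachable
from `((0),...,(0))` by a finite sequence of valid moves of types 1–6. -/
def CStarZ6 (l : List ℤ) : Prop :=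
  ∃ ms : List Move, ValidSeq ms (List.replicate l.length ([0] : List ℤ)) [l]

/-- A tuple of integers is C*_{Z,3}-realizable: the one-tuple state `[l]` is reachable
from `((0),...,(0))` by a finite sequence of valid moves of types 1, 2 and 3. -/
def CStarZ3 (l : List ℤ) : Prop :=
  ∃ ms : List Move, (∀ m ∈ ms, m.isType123) ∧
    ValidSeq ms (List.replicate l.length ([0] : List ℤ)) [l]


/-! Read a state as the pair (flat list of entries, list of tuple lengths). Type 2 and type 3
moves act on the entries only and type 1 moves on the lengths only, so any two of them commute
as operations on states. Validity is preserved as well: raising the value at a dominant position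
keeps it dominant, changing an entry does not affect dominance in the other tuples, and joining
tuples only enlarges them, so dominance after a type 1 move implies dominance before it. The one
thing to exclude is that `M` makes `i` dominant by acting inside the tuple of `i`. But `M` raises
a dominant entry `a ≠ i` and does not raise `Φ[i]`, so if `a` and `i` shared a tuple we would get
`Φ[a] + 1 ≤ Ψ[i] ≤ Φ[i] ≤ Φ[a]` in the state `Ψ` after `M`. -/

end CPaper

theorem List.modify_append {α : Type*} (f : α → α) (l₁ l₂ : List α) (i : ℕ) :
    (l₁ ++ l₂).modify i f =
      if i < l₁.length then l₁.modify i f ++ l₂ else l₁ ++ l₂.modify (i - l₁.length) f := by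
  apply List.ext_getElem?
  intro k
  split_ifs <;> simp only [List.getElem?_modify, List.getElem?_append, List.length_modify] <;>
    split_ifs <;> first | omega | simp_all

namespace CPaper

section Shape

theorem numPos_eq_sum_map_length (Φ : State) : numPos Φ = (Φ.map List.length).sum :=
  List.length_flatten

theorem tupleIdx_congr {Φ Ψ : State} (h : Ψ.map List.length = Φ.map List.length) :
    tupleIdx Ψ = tupleIdx Φ := by
  induction Ψ generalizing Φ with
  | nil => cases Φ <;> simp_all
  | cons u us ih =>
    cases Φ with
    | nil => simp at h
    | cons t ts =>
      simp only [List.map_cons, List.cons.injEq] at h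
      funext k
      simp only [tupleIdx, h.1, ih h.2]

theorem sameTuple_congr {Φ Ψ : State} (h : Ψ.map List.length = Φ.map List.length) {i k : ℕ} :
    SameTuple Ψ i k ↔ SameTuple Φ i k := by
  rw [SameTuple, SameTuple, tupleIdx_congr h]

theorem SameTuple.symm {Φ : State} {i k : ℕ} (h : SameTuple Φ i k) : SameTuple Φ k i :=
  Eq.symm h

theorem SameTuple.trans {Φ : State} {i j k : ℕ} (hij : SameTuple Φ i j) (hjk : SameTuple Φ j k) :
    SameTuple Φ i k :=
  Eq.trans hij hjk

end Shape

section ModifyFlat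

variable (f : ℤ → ℤ)

theorem modifyFlat_cons_of_lt {t : List ℤ} {ts : State} {i : ℕ} (h : i < t.length) :
    modifyFlat f i (t :: ts) = t.modify i f :: ts := by
  rw [modifyFlat, if_pos h, List.modify_eq_take_cons_drop h, List.getD_eq_getElem _ _ h]

theorem modifyFlat_cons_of_le {t : List ℤ} {ts : State} {i : ℕ} (h : t.length ≤ i) :
    modifyFlat f i (t :: ts) = t :: modifyFlat f (i - t.length) ts := by
  rw [modifyFlat, if_neg (by omega)]

theorem map_length_modifyFlat (i : ℕ) (Φ : State) :
    (modifyFlat f i Φ).map List.length = Φ.map List.length := by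
  induction Φ generalizing i with
  | nil => rfl
  | cons t ts ih =>
    rcases lt_or_ge i t.length with h | h
    · simp [modifyFlat_cons_of_lt f h]
    · simp [modifyFlat_cons_of_le f h, ih]

theorem length_modifyFlat (i : ℕ) (Φ : State) : (modifyFlat f i Φ).length = Φ.length := by
  simpa using congrArg List.length (map_length_modifyFlat f i Φ)

theorem entries_modifyFlat (i : ℕ) (Φ : State) :
    entries (modifyFlat f i Φ) = (entries Φ).modify i f := by
  induction Φ generalizing i with
  | nil => simp [entries, modifyFlat]
  | cons t ts ih =>
    simp only [entries, List.flatten_cons] at ih ⊢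
    rw [List.modify_append]
    rcases lt_or_ge i t.length with h | h
    · rw [modifyFlat_cons_of_lt f h, if_pos h, List.flatten_cons]
    · rw [modifyFlat_cons_of_le f h, if_neg (by omega), List.flatten_cons, ih]

theorem numPos_modifyFlat (i : ℕ) (Φ : State) : numPos (modifyFlat f i Φ) = numPos Φ := by
  rw [numPos_eq_sum_map_length, numPos_eq_sum_map_length, map_length_modifyFlat]

theorem entry_modifyFlat_self {Φ : State} {i : ℕ} (h : i < numPos Φ) :
    entry (modifyFlat f i Φ) i = f (entry Φ i) := by
  rw [numPos] at h
  simp [entry, entries_modifyFlat, List.getD_eq_getElem?_getD, h]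

theorem entry_modifyFlat_of_ne (Φ : State) {j k : ℕ} (h : j ≠ k) :
    entry (modifyFlat f j Φ) k = entry Φ k := by
  simp [entry, entries_modifyFlat, List.getD_eq_getElem?_getD, h]

theorem entry_modifyFlat_le (hf : ∀ x, f x ≤ x) (Φ : State) (j k : ℕ) :
    entry (modifyFlat f j Φ) k ≤ entry Φ k := by
  rcases eq_or_ne j k with rfl | h
  · rcases lt_or_ge j (numPos Φ) with hj | hj
    · rw [entry_modifyFlat_self f hj]
      exact hf _
    · simp [entry, entries_modifyFlat, List.modify_eq_self (show (entries Φ).length ≤ j from hj)]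
  · rw [entry_modifyFlat_of_ne f Φ h]

theorem sameTuple_modifyFlat (Φ : State) (j : ℕ) {i k : ℕ} :
    SameTuple (modifyFlat f j Φ) i k ↔ SameTuple Φ i k :=
  sameTuple_congr (map_length_modifyFlat f j Φ)

theorem modifyFlat_comm (g : ℤ → ℤ) (Φ : State) {i j : ℕ} (h : i ≠ j) :
    modifyFlat f i (modifyFlat g j Φ) = modifyFlat g j (modifyFlat f i Φ) := by
  rw [List.eq_iff_flatten_eq]
  refine ⟨?_, by simp only [map_length_modifyFlat]⟩
  change entries _ = entries _
  simp only [entries_modifyFlat, List.modify_modify_ne _ _ _ h.symm]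

end ModifyFlat

section JoinAt

theorem entries_joinAt (Φ : State) (d : ℕ) : entries (joinAt Φ d) = entries Φ := by
  induction d generalizing Φ with
  | zero => rcases Φ with _ | ⟨t, _ | ⟨u, ts⟩⟩ <;> simp [joinAt, entries]
  | succ d ih =>
    rcases Φ with _ | ⟨t, ts⟩
    · simp [joinAt, entries]
    · simpa [joinAt, entries] using ih ts

theorem map_length_joinAt (Φ : State) (d : ℕ) :
    (joinAt Φ d).map List.length =
      (Φ.map List.length).take d ++
        ((Φ.map List.length).getD d 0 + (Φ.map List.length).getD (d + 1) 0) ::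
          (Φ.map List.length).drop (d + 2) := by
  simp only [joinAt, List.map_append, List.map_take, List.map_cons, List.map_drop,
    List.length_append, List.getD_eq_getElem?_getD, List.getElem?_map]
  cases Φ[d]? <;> cases Φ[d + 1]? <;> rfl

theorem numPos_joinAt (Φ : State) (d : ℕ) : numPos (joinAt Φ d) = numPos Φ := by
  rw [numPos, entries_joinAt, numPos]

theorem entry_joinAt (Φ : State) (d k : ℕ) : entry (joinAt Φ d) k = entry Φ k := by
  rw [entry, entries_joinAt, entry]

theorem tupleIdx_joinAt {Φ : State} {d : ℕ} (h : d + 1 < Φ.length) (k : ℕ) :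
    tupleIdx (joinAt Φ d) k =
      if tupleIdx Φ k ≤ d then tupleIdx Φ k else tupleIdx Φ k - 1 := by
  induction d generalizing Φ k with
  | zero =>
    obtain ⟨t, u, ts, rfl⟩ : ∃ t u ts, Φ = t :: u :: ts := by
      rcases Φ with _ | ⟨t, _ | ⟨u, ts⟩⟩ <;> simp_all
    simp only [joinAt, tupleIdx, List.take_zero, List.getD_cons_zero, List.getD_cons_succ,
      List.drop_succ_cons, List.drop_zero, List.nil_append, List.length_append, Nat.sub_sub]
    split_ifs <;> omega
  | succ d ih =>
    obtain ⟨t, ts, rfl⟩ : ∃ t ts, Φ = t :: ts := by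
      rcases Φ with _ | ⟨t, ts⟩ <;> simp_all
    have hjoin : joinAt (t :: ts) (d + 1) = t :: joinAt ts d := by simp [joinAt]
    rw [hjoin, tupleIdx, tupleIdx, ih (by simpa using h)]
    split_ifs <;> omega

theorem SameTuple.joinAt {Φ : State} {d i k : ℕ} (h : d + 1 < Φ.length) (hik : SameTuple Φ i k) :
    SameTuple (joinAt Φ d) i k := by
  rw [SameTuple, tupleIdx_joinAt h, tupleIdx_joinAt h, hik]

theorem joinAt_modifyFlat (f : ℤ → ℤ) (Φ : State) (i d : ℕ) :
    joinAt (modifyFlat f i Φ) d = modifyFlat f i (joinAt Φ d) := by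
  rw [List.eq_iff_flatten_eq]
  constructor
  · change entries _ = entries _
    rw [entries_joinAt, entries_modifyFlat, entries_modifyFlat, entries_joinAt]
  · rw [map_length_joinAt, map_length_modifyFlat, map_length_modifyFlat, map_length_joinAt]

end JoinAt

section Dominance

variable {Φ : State} {i : ℕ}

theorem DominantAt.entry_le (h : DominantAt Φ i) {k : ℕ} (hk : k < numPos Φ)
    (hik : SameTuple Φ i k) : entry Φ k ≤ entry Φ i :=
  (le_abs_self _).trans (h k hk hik)

theorem DominantAt.entry_nonneg (h : DominantAt Φ i) (hi : i < numPos Φ) : 0 ≤ entry Φ i :=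
  (abs_nonneg _).trans (h i hi rfl)

theorem DominantAt.modifyFlat_self {f : ℤ → ℤ} (hf : ∀ x, x ≤ f x) (h : DominantAt Φ i)
    (hi : i < numPos Φ) : DominantAt (modifyFlat f i Φ) i := by
  intro k hk hik
  rw [numPos_modifyFlat] at hk
  rw [sameTuple_modifyFlat] at hik
  rw [entry_modifyFlat_self f hi]
  rcases eq_or_ne i k with rfl | hne
  · rw [entry_modifyFlat_self f hi, abs_of_nonneg ((h.entry_nonneg hi).trans (hf _))]
  · rw [entry_modifyFlat_of_ne f Φ hne]
    exact (h k hk hik).trans (hf _)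

theorem dominantAt_modifyFlat_iff {f : ℤ → ℤ} {j : ℕ} (hij : ¬ SameTuple Φ i j) :
    DominantAt (modifyFlat f j Φ) i ↔ DominantAt Φ i := by
  have hentry : ∀ k, SameTuple Φ i k → entry (modifyFlat f j Φ) k = entry Φ k := by
    rintro k hik
    refine entry_modifyFlat_of_ne f Φ ?_
    rintro rfl
    exact hij hik
  unfold DominantAt
  simp only [numPos_modifyFlat, sameTuple_modifyFlat]
  refine forall₂_congr fun k _ => imp_congr_right fun hik => ?_
  rw [hentry k hik, hentry i rfl]

theorem DominantAt.of_joinAt {d : ℕ} (hd : d + 1 < Φ.length) (h : DominantAt (joinAt Φ d) i) :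
    DominantAt Φ i := by
  intro k hk hik
  have := h k (by rwa [numPos_joinAt]) (hik.joinAt hd)
  rwa [entry_joinAt, entry_joinAt] at this

theorem not_sameTuple_of_dominantAt {Ψ : State} {a : ℕ} (ha : DominantAt Φ a)
    (hi : DominantAt Ψ i) (hshape : Ψ.map List.length = Φ.map List.length)
    (ha_lt : a < numPos Φ) (hi_lt : i < numPos Φ) (hraise : entry Φ a < entry Ψ a)
    (hlower : entry Ψ i ≤ entry Φ i) : ¬ SameTuple Φ i a := by
  intro hia
  have hnum : numPos Ψ = numPos Φ := by
    rw [numPos_eq_sum_map_length, numPos_eq_sum_map_length, hshape]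
  have hΨ := hi.entry_le (hnum ▸ ha_lt) ((sameTuple_congr hshape).2 hia)
  have hΦ := ha.entry_le hi_lt hia.symm
  omega

end Dominance

section Swap

variable {Φ : State} {i : ℕ}

theorem swap_valid_t2_of_t1 {d : ℕ} (hM : (Move.t1 d).Valid Φ)
    (hi : (Move.t2 i).Valid ((Move.t1 d).apply Φ)) :
    (Move.t2 i).Valid Φ ∧ (Move.t1 d).Valid ((Move.t2 i).apply Φ) ∧
      (Move.t1 d).apply ((Move.t2 i).apply Φ) = (Move.t2 i).apply ((Move.t1 d).apply Φ) := by
  simp only [Move.Valid, Move.apply] at hM hi ⊢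
  obtain ⟨hi, hdom⟩ := hi
  rw [numPos_joinAt] at hi
  exact ⟨⟨hi, hdom.of_joinAt hM⟩, by rwa [length_modifyFlat], joinAt_modifyFlat _ Φ i d⟩

theorem swap_valid_t2_of_t2 {j : ℕ} (hM : (Move.t2 j).Valid Φ)
    (hi : (Move.t2 i).Valid ((Move.t2 j).apply Φ)) :
    (Move.t2 i).Valid Φ ∧ (Move.t2 j).Valid ((Move.t2 i).apply Φ) ∧
      (Move.t2 j).apply ((Move.t2 i).apply Φ) = (Move.t2 i).apply ((Move.t2 j).apply Φ) := by
  simp only [Move.Valid, Move.apply] at hM hi ⊢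
  obtain ⟨hj, hdj⟩ := hM
  obtain ⟨hi, hdi⟩ := hi
  rw [numPos_modifyFlat] at hi
  rcases eq_or_ne i j with rfl | hij
  · exact ⟨⟨hi, hdj⟩,
      ⟨by rwa [numPos_modifyFlat], hdj.modifyFlat_self (fun x => (lt_add_one x).le) hi⟩, rfl⟩
  have hsep : ¬ SameTuple Φ i j :=
    not_sameTuple_of_dominantAt hdj hdi (map_length_modifyFlat _ j Φ) hj hi
      (by rw [entry_modifyFlat_self _ hj]; omega) (entry_modifyFlat_of_ne _ Φ hij.symm).le
  exact ⟨⟨hi, (dominantAt_modifyFlat_iff hsep).1 hdi⟩,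
    ⟨by rwa [numPos_modifyFlat], (dominantAt_modifyFlat_iff fun h => hsep h.symm).2 hdj⟩,
    modifyFlat_comm _ _ Φ hij.symm⟩

theorem swap_valid_t2_of_t3 {a b : ℕ} (hM : (Move.t3 a b).Valid Φ)
    (hi : (Move.t2 i).Valid ((Move.t3 a b).apply Φ)) :
    (Move.t2 i).Valid Φ ∧ (Move.t3 a b).Valid ((Move.t2 i).apply Φ) ∧
      (Move.t3 a b).apply ((Move.t2 i).apply Φ) = (Move.t2 i).apply ((Move.t3 a b).apply Φ) := by
  simp only [Move.Valid, Move.apply] at hM hi ⊢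
  obtain ⟨ha, hb, hab, hsab, hda, hb0⟩ := hM
  obtain ⟨hi, hdi⟩ := hi
  simp only [numPos_modifyFlat, sameTuple_modifyFlat] at hi ⊢
  rcases eq_or_ne i a with rfl | hia
  · exact ⟨⟨hi, hda⟩, ⟨hi, hb, hab, hsab, hda.modifyFlat_self (fun x => (lt_add_one x).le) hi,
      by rwa [entry_modifyFlat_of_ne _ Φ hab]⟩, (modifyFlat_comm _ _ _ hab).symm⟩
  have hsep : ¬ SameTuple Φ i a :=
    not_sameTuple_of_dominantAt hda hdi
      (by rw [map_length_modifyFlat, map_length_modifyFlat]) ha hi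
      (by rw [entry_modifyFlat_of_ne _ _ hab.symm, entry_modifyFlat_self _ ha]; omega)
      ((entry_modifyFlat_le _ (fun x => (sub_one_lt x).le) _ b i).trans
        (entry_modifyFlat_of_ne _ Φ hia.symm).le)
  have hsep' : ¬ SameTuple Φ i b := fun h => hsep (h.trans hsab.symm)
  have hib : i ≠ b := by
    rintro rfl
    exact hsep' rfl
  refine ⟨⟨hi, ?_⟩, ⟨ha, hb, hab, hsab, (dominantAt_modifyFlat_iff fun h => hsep h.symm).2 hda,
    by rwa [entry_modifyFlat_of_ne _ Φ hib]⟩, ?_⟩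
  · rwa [dominantAt_modifyFlat_iff ((sameTuple_modifyFlat _ _ _).not.2 hsep'),
      dominantAt_modifyFlat_iff hsep] at hdi
  · rw [modifyFlat_comm _ _ Φ hia.symm, modifyFlat_comm _ _ _ hib.symm]

end Swap

theorem swap_valid_T2_general (Φ : State) (M : Move) (hM : M.isType123)
    (i : ℕ) (hMval : M.Valid Φ) (hT2 : (Move.t2 i).Valid (M.apply Φ)) :
    (Move.t2 i).Valid Φ ∧ M.Valid ((Move.t2 i).apply Φ) ∧
      M.apply ((Move.t2 i).apply Φ) = (Move.t2 i).apply (M.apply Φ) := by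
  cases M with
  | t1 d => exact swap_valid_t2_of_t1 hMval hT2
  | t2 j => exact swap_valid_t2_of_t2 hMval hT2
  | t3 a b => exact swap_valid_t2_of_t3 hMval hT2
  | t4 | t5 | t6 => exact hM.elim

/-- A valid move of type 1, 2 or 3 followed by a valid type 2 move can be swapped:
both moves stay valid and the final state is unchanged. -/
theorem swap_valid_T2 (Φ : State) (hΦ : IsState Φ) (M : Move) (hM : M.isType123)
    (i : ℕ) (hMval : M.Valid Φ) (hT2 : (Move.t2 i).Valid (M.apply Φ)) :
    (Move.t2 i).Valid Φ ∧ M.Valid ((Move.t2 i).apply Φ) ∧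
      M.apply ((Move.t2 i).apply Φ) = (Move.t2 i).apply (M.apply Φ) :=
  swap_valid_T2_general Φ M hM i hMval hT2

end CPaper
end

section
/- If a multiset {r1,...,rn} of rational numbers is C_{Q,3}-realizable, then there exists a positive integer q such that the multiset {q·r1,...,q·rn} consists of integers and is C_{Z,3}-realizable. -/
/-!
A C_{Q,3} derivation uses only finitely many increments ε. Multiplying everything by a common
multiple q of their denominators preserves every dominance and sign condition, keeps all
multisets of the derivation integral (they start at 0 and move by the integers q·ε), and turns a
step with increment ε into q·ε consecutive unit steps of C_{Z,3}.
-/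

namespace CPaper


/-- One step of the C_{Q,3} rewriting procedure on collections of multisets of rationals. -/
inductive StepQ3 : Multiset (Multiset ℚ) → Multiset (Multiset ℚ) → Prop where
  | join (A B : Multiset ℚ) (C : Multiset (Multiset ℚ)) :
      StepQ3 (A ::ₘ B ::ₘ C) ((A + B) ::ₘ C)
  | rule2 (a ε : ℚ) (s : Multiset ℚ) (C : Multiset (Multiset ℚ))
      (hdom : ∀ b ∈ a ::ₘ s, |b| ≤ a) (hε : 0 < ε) :
      StepQ3 ((a ::ₘ s) ::ₘ C) (((a + ε) ::ₘ s) ::ₘ C)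
  | rule3 (a b ε : ℚ) (s : Multiset ℚ) (C : Multiset (Multiset ℚ))
      (hdom : ∀ c ∈ a ::ₘ b ::ₘ s, |c| ≤ a) (hb : b ≤ 0) (hε : 0 < ε) :
      StepQ3 ((a ::ₘ b ::ₘ s) ::ₘ C) (((a + ε) ::ₘ (b - ε) ::ₘ s) ::ₘ C)

/-- A multiset of rationals is C_{Q,3}-realizable. -/
def CQ3Realizable (Λ : Multiset ℚ) : Prop :=
  ∃ n : ℕ, Relation.ReflTransGen StepQ3 (Multiset.replicate n ({0} : Multiset ℚ)) {Λ}


/-- One step of the C_{Z,6} rewriting procedure on collections of multisets of integers. -/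
inductive StepZ6 : Multiset (Multiset ℤ) → Multiset (Multiset ℤ) → Prop where
  | join (A B : Multiset ℤ) (C : Multiset (Multiset ℤ)) :
      StepZ6 (A ::ₘ B ::ₘ C) ((A + B) ::ₘ C)
  | rule2 (a : ℤ) (s : Multiset ℤ) (C : Multiset (Multiset ℤ))
      (hdom : ∀ b ∈ a ::ₘ s, |b| ≤ a) :
      StepZ6 ((a ::ₘ s) ::ₘ C) (((a + 1) ::ₘ s) ::ₘ C)
  | rule3 (a b : ℤ) (s : Multiset ℤ) (C : Multiset (Multiset ℤ))
      (hdom : ∀ c ∈ a ::ₘ b ::ₘ s, |c| ≤ a) (hb : b ≤ 0) :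
      StepZ6 ((a ::ₘ b ::ₘ s) ::ₘ C) (((a + 1) ::ₘ (b - 1) ::ₘ s) ::ₘ C)
  | rule4 (a b : ℤ) (s : Multiset ℤ) (C : Multiset (Multiset ℤ))
      (hdom : ∀ c ∈ a ::ₘ b ::ₘ s, |c| ≤ a) (hb : 0 < b) :
      StepZ6 ((a ::ₘ b ::ₘ s) ::ₘ C) (((a + 1) ::ₘ (b - 1) ::ₘ s) ::ₘ C)
  | rule5 (a b : ℤ) (s : Multiset ℤ) (C : Multiset (Multiset ℤ))
      (hdom : ∀ c ∈ a ::ₘ b ::ₘ s, |c| ≤ a) (hb : b < 0) :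
      StepZ6 ((a ::ₘ b ::ₘ s) ::ₘ C) (((a + 1) ::ₘ (b + 1) ::ₘ s) ::ₘ C)
  | rule6 (a b : ℤ) (s : Multiset ℤ) (C : Multiset (Multiset ℤ))
      (hdom : ∀ c ∈ a ::ₘ b ::ₘ s, |c| ≤ a) (hb : 0 ≤ b) :
      StepZ6 ((a ::ₘ b ::ₘ s) ::ₘ C) (((a + 1) ::ₘ (b + 1) ::ₘ s) ::ₘ C)

/-- One step of the C_{Z,3} rewriting procedure (only rules (i)–(iii)). -/
inductive StepZ3 : Multiset (Multiset ℤ) → Multiset (Multiset ℤ) → Prop where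
  | join (A B : Multiset ℤ) (C : Multiset (Multiset ℤ)) :
      StepZ3 (A ::ₘ B ::ₘ C) ((A + B) ::ₘ C)
  | rule2 (a : ℤ) (s : Multiset ℤ) (C : Multiset (Multiset ℤ))
      (hdom : ∀ b ∈ a ::ₘ s, |b| ≤ a) :
      StepZ3 ((a ::ₘ s) ::ₘ C) (((a + 1) ::ₘ s) ::ₘ C)
  | rule3 (a b : ℤ) (s : Multiset ℤ) (C : Multiset (Multiset ℤ))
      (hdom : ∀ c ∈ a ::ₘ b ::ₘ s, |c| ≤ a) (hb : b ≤ 0) :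
      StepZ3 ((a ::ₘ b ::ₘ s) ::ₘ C) (((a + 1) ::ₘ (b - 1) ::ₘ s) ::ₘ C)

/-- A multiset of integers is C_{Z,6}-realizable. -/
def CZ6Realizable (Λ : Multiset ℤ) : Prop :=
  ∃ n : ℕ, Relation.ReflTransGen StepZ6 (Multiset.replicate n ({0} : Multiset ℤ)) {Λ}

/-- A multiset of integers is C_{Z,3}-realizable. -/
def CZ3Realizable (Λ : Multiset ℤ) : Prop :=
  ∃ n : ℕ, Relation.ReflTransGen StepZ3 (Multiset.replicate n ({0} : Multiset ℤ)) {Λ}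


theorem _root_.Multiset.exists_eq_cons_of_map_eq_cons {α β : Type*} {f : α → β}
    {s : Multiset α} {b : β} {t : Multiset β} (h : s.map f = b ::ₘ t) :
    ∃ a u, s = a ::ₘ u ∧ f a = b ∧ u.map f = t := by
  classical
  obtain ⟨a, ha, rfl, rfl⟩ := (Multiset.map_eq_cons f s t b).2 h
  exact ⟨a, s.erase a, (Multiset.cons_erase ha).symm, rfl, rfl⟩

theorem exists_natCast_eq_mul_of_den_dvd {ε : ℚ} (hε : 0 ≤ ε) {q : ℕ} (h : ε.den ∣ q) :
    ∃ k : ℕ, (k : ℚ) = q * ε := by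
  obtain ⟨t, rfl⟩ := h
  refine ⟨t * ε.num.toNat, ?_⟩
  have hnum : ((ε.num.toNat : ℤ) : ℚ) = ε.num := by
    rw [Int.toNat_of_nonneg (Rat.num_nonneg.2 hε)]
  push_cast at hnum ⊢
  rw [hnum, ← Rat.den_mul_eq_num]
  ring

section Dominance

variable {α : Type*}

def IsDominant [AddCommGroup α] [LinearOrder α] (a : α) (s : Multiset α) : Prop :=
  ∀ b ∈ a ::ₘ s, |b| ≤ a

section OrderedGroup

variable [AddCommGroup α] [LinearOrder α] [IsOrderedAddMonoid α] {a b c : α} {s : Multiset α}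

theorem IsDominant.nonneg (h : IsDominant a s) : 0 ≤ a :=
  (abs_nonneg a).trans (h a (Multiset.mem_cons_self a s))

theorem IsDominant.add (h : IsDominant a s) (hc : 0 ≤ c) : IsDominant (a + c) s := by
  intro x hx
  rcases Multiset.mem_cons.1 hx with rfl | hx
  · rw [abs_of_nonneg (add_nonneg h.nonneg hc)]
  · exact (h x (Multiset.mem_cons_of_mem hx)).trans (le_add_of_nonneg_right hc)

theorem IsDominant.add_cons_sub (h : IsDominant a (b ::ₘ s)) (hb : b ≤ 0) (hc : 0 ≤ c) :
    IsDominant (a + c) ((b - c) ::ₘ s) := by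
  have hb' : -b ≤ a := by
    simpa [abs_of_nonpos hb] using h b (by simp)
  intro x hx
  rcases Multiset.mem_cons.1 hx with rfl | hx
  · exact (h.add hc) _ (Multiset.mem_cons_self _ _)
  rcases Multiset.mem_cons.1 hx with rfl | hx
  · rw [abs_of_nonpos (sub_nonpos.2 (hb.trans hc)), neg_sub, sub_eq_add_neg, add_comm]
    exact add_le_add_left hb' c
  · exact (h.add hc) x (by simp [hx])

end OrderedGroup

theorem IsDominant.mul [Ring α] [LinearOrder α] [IsStrictOrderedRing α] {a q : α}
    {s : Multiset α} (h : IsDominant a s) (hq : 0 ≤ q) :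
    IsDominant (q * a) (s.map (q * ·)) := by
  rw [IsDominant, ← Multiset.map_cons (q * ·), Multiset.forall_mem_map_iff]
  intro x hx
  rw [abs_mul, abs_of_nonneg hq]
  exact mul_le_mul_of_nonneg_left (h x hx) hq

theorem isDominant_intCast_iff {a : ℤ} {s : Multiset ℤ} :
    IsDominant (a : ℚ) (s.map (↑)) ↔ IsDominant a s := by
  rw [IsDominant, ← Multiset.map_cons, Multiset.forall_mem_map_iff]
  exact forall₂_congr fun x _ => by exact_mod_cast Iff.rfl

end Dominance

theorem StepZ3.reflTransGen_rule2 {a : ℤ} {s : Multiset ℤ} (C : Multiset (Multiset ℤ))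
    (hdom : IsDominant a s) (k : ℕ) :
    Relation.ReflTransGen StepZ3 ((a ::ₘ s) ::ₘ C) (((a + k) ::ₘ s) ::ₘ C) := by
  induction k with
  | zero => simpa using .refl
  | succ m ih =>
    rw [Nat.cast_succ, ← add_assoc]
    exact ih.tail (StepZ3.rule2 _ s C (hdom.add m.cast_nonneg))

theorem StepZ3.reflTransGen_rule3 {a b : ℤ} {s : Multiset ℤ} (C : Multiset (Multiset ℤ))
    (hdom : IsDominant a (b ::ₘ s)) (hb : b ≤ 0) (k : ℕ) :
    Relation.ReflTransGen StepZ3 ((a ::ₘ b ::ₘ s) ::ₘ C)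
      (((a + k) ::ₘ (b - k) ::ₘ s) ::ₘ C) := by
  induction k with
  | zero => simpa using .refl
  | succ m ih =>
    rw [Nat.cast_succ, ← add_assoc, ← sub_sub]
    exact ih.tail (StepZ3.rule3 _ _ s C (hdom.add_cons_sub hb m.cast_nonneg) (by omega))

def scaleColl (q : ℚ) (X : Multiset (Multiset ℚ)) : Multiset (Multiset ℚ) :=
  X.map (Multiset.map (q * ·))

def castColl (Z : Multiset (Multiset ℤ)) : Multiset (Multiset ℚ) :=
  Z.map (Multiset.map (↑))

def ZSimulates (q : ℕ) (X Y : Multiset (Multiset ℚ)) : Prop :=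
  ∀ Z, castColl Z = scaleColl q X →
    ∃ Z', castColl Z' = scaleColl q Y ∧ Relation.ReflTransGen StepZ3 Z Z'

theorem ZSimulates.refl (q : ℕ) (X : Multiset (Multiset ℚ)) : ZSimulates q X X :=
  fun Z hZ => ⟨Z, hZ, .refl⟩

theorem ZSimulates.trans {q : ℕ} {X Y W : Multiset (Multiset ℚ)} (hXY : ZSimulates q X Y)
    (hYW : ZSimulates q Y W) : ZSimulates q X W := by
  intro Z hZ
  obtain ⟨Z', hZ', hZZ'⟩ := hXY Z hZ
  obtain ⟨Z'', hZ'', hZ'Z''⟩ := hYW Z' hZ'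
  exact ⟨Z'', hZ'', hZZ'.trans hZ'Z''⟩

theorem exists_cons_of_castColl_eq_scaleColl_cons {q : ℚ} {Z : Multiset (Multiset ℤ)} {A : Multiset ℚ}
    {X : Multiset (Multiset ℚ)} (h : castColl Z = scaleColl q (A ::ₘ X)) :
    ∃ A' Z', Z = A' ::ₘ Z' ∧ A'.map (↑) = A.map (q * ·) ∧ castColl Z' = scaleColl q X :=
  Multiset.exists_eq_cons_of_map_eq_cons (by rwa [scaleColl, Multiset.map_cons] at h)

theorem exists_cons_of_map_intCast_eq_map_mul_cons {q : ℚ} {S : Multiset ℤ} {a : ℚ} {s : Multiset ℚ}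
    (h : S.map (↑) = (a ::ₘ s).map (q * ·)) :
    ∃ a' s', S = a' ::ₘ s' ∧ (a' : ℚ) = q * a ∧ s'.map (↑) = s.map (q * ·) :=
  Multiset.exists_eq_cons_of_map_eq_cons (by rwa [Multiset.map_cons] at h)

theorem zSimulates_join (q : ℕ) (A B : Multiset ℚ) (C : Multiset (Multiset ℚ)) :
    ZSimulates q (A ::ₘ B ::ₘ C) ((A + B) ::ₘ C) := by
  intro Z hZ
  obtain ⟨A', Z, rfl, hA, hZ⟩ := exists_cons_of_castColl_eq_scaleColl_cons hZ
  obtain ⟨B', C', rfl, hB, hC⟩ := exists_cons_of_castColl_eq_scaleColl_cons hZ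
  refine ⟨(A' + B') ::ₘ C', ?_, .single (StepZ3.join A' B' C')⟩
  simp_all [castColl, scaleColl]

theorem zSimulates_rule2 {q k : ℕ} {a ε : ℚ} {s : Multiset ℚ} (C : Multiset (Multiset ℚ))
    (hdom : IsDominant a s) (hk : (k : ℚ) = q * ε) :
    ZSimulates q ((a ::ₘ s) ::ₘ C) (((a + ε) ::ₘ s) ::ₘ C) := by
  intro Z hZ
  obtain ⟨S, C', rfl, hS, hC⟩ := exists_cons_of_castColl_eq_scaleColl_cons hZ
  obtain ⟨a', s', rfl, ha, hs⟩ := exists_cons_of_map_intCast_eq_map_mul_cons hS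
  have hdom' : IsDominant a' s' := by
    rw [← isDominant_intCast_iff, ha, hs]
    exact hdom.mul q.cast_nonneg
  refine ⟨((a' + k) ::ₘ s') ::ₘ C', ?_, StepZ3.reflTransGen_rule2 C' hdom' k⟩
  simp_all [castColl, scaleColl, mul_add]

theorem zSimulates_rule3 {q k : ℕ} {a b ε : ℚ} {s : Multiset ℚ} (C : Multiset (Multiset ℚ))
    (hdom : IsDominant a (b ::ₘ s)) (hb : b ≤ 0) (hk : (k : ℚ) = q * ε) :
    ZSimulates q ((a ::ₘ b ::ₘ s) ::ₘ C) (((a + ε) ::ₘ (b - ε) ::ₘ s) ::ₘ C) := by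
  intro Z hZ
  obtain ⟨S, C', rfl, hS, hC⟩ := exists_cons_of_castColl_eq_scaleColl_cons hZ
  obtain ⟨a', R, rfl, ha, hR⟩ := exists_cons_of_map_intCast_eq_map_mul_cons hS
  have hdom' : IsDominant a' R := by
    rw [← isDominant_intCast_iff, ha, hR]
    exact hdom.mul q.cast_nonneg
  obtain ⟨b', s', rfl, hb', hs⟩ := exists_cons_of_map_intCast_eq_map_mul_cons hR
  have hb'_nonpos : b' ≤ 0 := by
    have : (b' : ℚ) ≤ 0 := hb' ▸ mul_nonpos_of_nonneg_of_nonpos q.cast_nonneg hb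
    exact_mod_cast this
  refine ⟨((a' + k) ::ₘ (b' - k) ::ₘ s') ::ₘ C', ?_,
    StepZ3.reflTransGen_rule3 C' hdom' hb'_nonpos k⟩
  simp_all [castColl, scaleColl, mul_add, mul_sub]

theorem StepQ3.exists_zSimulates {X Y : Multiset (Multiset ℚ)} (h : StepQ3 X Y) :
    ∃ d : ℕ, 0 < d ∧ ∀ q, d ∣ q → ZSimulates q X Y := by
  cases h with
  | join A B C => exact ⟨1, one_pos, fun q _ => zSimulates_join q A B C⟩
  | rule2 a ε s C hdom hε =>
    refine ⟨ε.den, ε.den_pos, fun q hq => ?_⟩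
    obtain ⟨k, hk⟩ := exists_natCast_eq_mul_of_den_dvd hε.le hq
    exact zSimulates_rule2 C hdom hk
  | rule3 a b ε s C hdom hb hε =>
    refine ⟨ε.den, ε.den_pos, fun q hq => ?_⟩
    obtain ⟨k, hk⟩ := exists_natCast_eq_mul_of_den_dvd hε.le hq
    exact zSimulates_rule3 C hdom hb hk

theorem exists_zSimulates_of_reflTransGen {X Y : Multiset (Multiset ℚ)}
    (h : Relation.ReflTransGen StepQ3 X Y) :
    ∃ d : ℕ, 0 < d ∧ ∀ q, d ∣ q → ZSimulates q X Y := by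
  induction h with
  | refl => exact ⟨1, one_pos, fun q _ => .refl q _⟩
  | tail _ hstep ih =>
    obtain ⟨d₁, hd₁, H₁⟩ := ih
    obtain ⟨d₂, hd₂, H₂⟩ := hstep.exists_zSimulates
    exact ⟨d₁ * d₂, mul_pos hd₁ hd₂, fun q hq =>
      (H₁ q (dvd_of_mul_right_dvd hq)).trans (H₂ q (dvd_of_mul_left_dvd hq))⟩

/-- If a multiset of rationals is C_{Q,3}-realizable, then some positive integer
multiple of it consists of integers and is C_{Z,3}-realizable. -/
theorem exists_mul_CZ3Realizable_of_CQ3Realizable (Λ : Multiset ℚ)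
    (h : CQ3Realizable Λ) :
    ∃ q : ℤ, 0 < q ∧ ∃ Λ' : Multiset ℤ,
      Λ'.map (fun x : ℤ => (x : ℚ)) = Λ.map (fun r => (q : ℚ) * r) ∧
      CZ3Realizable Λ' := by
  obtain ⟨n, hchain⟩ := h
  obtain ⟨d, hd, hsim⟩ := exists_zSimulates_of_reflTransGen hchain
  have hstart : castColl (Multiset.replicate n {0}) = scaleColl d (Multiset.replicate n {0}) := by
    simp [castColl, scaleColl, Multiset.map_replicate]
  obtain ⟨Z, hZ, hZchain⟩ := hsim d dvd_rfl _ hstart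
  obtain ⟨Λ', rfl, hΛ'⟩ := Multiset.map_eq_singleton.1 hZ
  exact ⟨d, by exact_mod_cast hd, Λ', by simpa using hΛ', n, hZchain⟩

end CPaper
end

section
/- Let {λ1,...,λn} be a realizable multiset of complex numbers whose Perron root is λ1 (λ1 is real and λ1 ≥ |λj| for all j). Then for every real ε > 0 the multiset {λ1+ε, λ2,...,λn} is realizable. -/
namespace CPaper


/-- A multiset `Λ` of complex numbers is realizable if there is a square nonnegative real
matrix of size `card Λ` whose characteristic polynomial (over `ℂ`) is `∏_{λ ∈ Λ} (X - λ)`,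
i.e. whose eigenvalues counted with algebraic multiplicity are exactly the elements of `Λ`. -/
def Realizable (Λ : Multiset ℂ) : Prop :=
  ∃ A : Matrix (Fin (Multiset.card Λ)) (Fin (Multiset.card Λ)) ℝ,
    (∀ i j, 0 ≤ A i j) ∧
    (A.map (fun x : ℝ => (x : ℂ))).charpoly =
      (Λ.map (fun z : ℂ => Polynomial.X - Polynomial.C z)).prod

/-!
Let `A ≥ 0` realize `{r, λ₂, …, λₙ}` with `r ≥ |λⱼ|`. The spectral radius of `A` is at most `r`,
so by Gelfand's formula the Neumann series `∑ A ^ k / t ^ (k + 1)` converges for `t > r` and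
`(t - A)⁻¹ ≥ 0`. Tested against a real eigenvector for `r`, the vector `(t - A)⁻¹ 𝟙` blows up like
`(t - r)⁻¹` as `t ↓ r`, so its normalizations in the standard simplex are approximate eigenvectors
and accumulate at a nonnegative eigenvector `w` for `r`. By Brauer's theorem, `A + w uᵀ` with
`u ≥ 0` supported where `w > 0` and `u ⬝ᵥ w = ε` is a nonnegative matrix with spectrum
`{r + ε, λ₂, …, λₙ}`.
-/

open Matrix Polynomial Filter
open scoped NNReal ENNReal

theorem scalar_sub_mulVec {R n : Type*} [CommRing R] [Fintype n] [DecidableEq n]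
    (A : Matrix n n R) (t : R) (v : n → R) : (scalar n t - A) *ᵥ v = t • v - A *ᵥ v := by
  rw [sub_mulVec, scalar_apply, ← smul_one_eq_diagonal, smul_mulVec, one_mulVec]

theorem det_one_sub_smul_vecMulVec {R n : Type*} [CommRing R] [Fintype n] [DecidableEq n]
    (c : R) (w u : n → R) :
    (1 - c • vecMulVec w u).det = 1 - c * (u ⬝ᵥ w) := by
  rw [sub_eq_add_neg, ← neg_smul, ← smul_vecMulVec, vecMulVec_eq Unit,
    det_one_add_replicateCol_mul_replicateRow, dotProduct_smul, smul_eq_mul, neg_mul,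
    ← sub_eq_add_neg]

/-- **Brauer's theorem**. -/
theorem charpoly_add_vecMulVec {K n : Type*} [Field K] [Infinite K] [Fintype n] [DecidableEq n]
    {A : Matrix n n K} {r : K} {w : n → K}
    (hw : A *ᵥ w = r • w) (u : n → K) :
    (X - C r) * (A + vecMulVec w u).charpoly = (X - C (r + u ⬝ᵥ w)) * A.charpoly := by
  refine eq_of_infinite_eval_eq _ _ ((Set.finite_singleton r).infinite_compl.mono fun x hx => ?_)
  have hxr : x - r ≠ 0 := sub_ne_zero.2 hx
  have hfactor : scalar n x - (A + vecMulVec w u) =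
      (scalar n x - A) * (1 - (x - r)⁻¹ • vecMulVec w u) := by
    have hMw : (scalar n x - A) *ᵥ w = (x - r) • w := by
      rw [scalar_sub_mulVec, hw, sub_smul]
    rw [Matrix.mul_sub, Matrix.mul_one, Matrix.mul_smul, mul_vecMulVec, hMw, smul_vecMulVec,
      smul_smul, inv_mul_cancel₀ hxr, one_smul, sub_add_eq_sub_sub]
  simp only [Set.mem_ofPred_eq, eval_mul, eval_sub, eval_X, eval_C, eval_charpoly, hfactor,
    det_mul, det_one_sub_smul_vecMulVec]
  field_simp
  ring

section Neumann

attribute [local instance] Matrix.linftyOpNormedRing Matrix.linftyOpNormedAlgebra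

theorem eventually_nnnorm_pow_le_of_spectralRadius_lt {A : Type*} [NormedRing A]
    [NormedAlgebra ℂ A] [CompleteSpace A] {a : A} {q : ℝ≥0} (h : spectralRadius ℂ a < q) :
    ∀ᶠ k in atTop, ‖a ^ k‖₊ ≤ q ^ k := by
  filter_upwards [(spectrum.pow_nnnorm_pow_one_div_tendsto_nhds_spectralRadius a).eventually
    (gt_mem_nhds h), eventually_gt_atTop 0] with k hk hk0
  rw [one_div, ENNReal.rpow_inv_lt_iff (by positivity), ENNReal.rpow_natCast] at hk
  exact_mod_cast hk.le

variable {n : Type*} [Fintype n] [DecidableEq n]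

theorem spectralRadius_le_of_charpoly_eq {M : Matrix n n ℂ} {Λ : Multiset ℂ}
    (hcp : M.charpoly = (Λ.map fun z => X - C z).prod) {r : ℝ} (hΛ : ∀ z ∈ Λ, ‖z‖ ≤ r) :
    spectralRadius ℂ M ≤ ENNReal.ofReal r := by
  refine iSup₂_le fun z hz => ?_
  rw [mem_spectrum_iff_isRoot_charpoly, ← mem_roots (charpoly_monic M).ne_zero, hcp,
    roots_multiset_prod_X_sub_C] at hz
  rw [← enorm_eq_nnnorm, ← ofReal_norm]
  exact ENNReal.ofReal_le_ofReal (hΛ z hz)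

theorem nnnorm_map_ofReal (M : Matrix n n ℝ) : ‖M.map (fun x : ℝ => (x : ℂ))‖₊ = ‖M‖₊ := by
  simp only [linfty_opNNNorm_def, map_apply, Complex.nnnorm_real]

theorem summable_pow_inv_smul {A : Matrix n n ℝ} {t : ℝ}
    (ht : spectralRadius ℂ (A.map (fun x : ℝ => (x : ℂ))) < ENNReal.ofReal t) :
    Summable fun k => (t⁻¹ • A) ^ k := by
  obtain ⟨q, hρq, hqt⟩ := ENNReal.lt_iff_exists_nnreal_btwn.1 ht
  have hq : (q : ℝ) < t := ENNReal.coe_lt_ofReal.1 hqt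
  have ht0 : 0 < t := lt_of_le_of_lt q.coe_nonneg hq
  refine Summable.of_norm_bounded_eventually (g := fun k => ((q : ℝ) / t) ^ k)
    (summable_geometric_of_lt_one (by positivity) ((div_lt_one ht0).2 hq)) ?_
  refine Nat.cofinite_eq_atTop ▸ ?_
  filter_upwards [eventually_nnnorm_pow_le_of_spectralRadius_lt hρq] with k hk
  have hmap : (A.map (fun x : ℝ => (x : ℂ))) ^ k = (A ^ k).map (fun x : ℝ => (x : ℂ)) :=
    (map_pow Complex.ofRealHom.mapMatrix A k).symm
  rw [hmap, nnnorm_map_ofReal, ← NNReal.coe_le_coe, coe_nnnorm] at hk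
  rw [_root_.smul_pow, norm_smul, div_pow, div_eq_inv_mul, norm_pow, norm_inv,
    Real.norm_of_nonneg ht0.le, inv_pow]
  gcongr
  exact_mod_cast hk

theorem exists_nonneg_inverse_scalar_sub_of_spectralRadius_lt {A : Matrix n n ℝ}
    (hA : ∀ i j, 0 ≤ A i j) {t : ℝ}
    (ht : spectralRadius ℂ (A.map (fun x : ℝ => (x : ℂ))) < ENNReal.ofReal t) :
    ∃ R : Matrix n n ℝ, (∀ i j, 0 ≤ R i j) ∧ (scalar n t - A) * R = 1 := by
  have ht0 : 0 < t := ENNReal.ofReal_pos.1 (lt_of_le_of_lt zero_le ht)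
  have hsum := summable_pow_inv_smul ht
  refine ⟨t⁻¹ • ∑' k, (t⁻¹ • A) ^ k, fun i j => ?_, ?_⟩
  · refine mul_nonneg (inv_nonneg.2 ht0.le) (HasSum.nonneg (fun k => ?_)
      (Pi.hasSum.1 (Pi.hasSum.1 hsum.hasSum i) j))
    exact pow_apply_nonneg (fun i j => mul_nonneg (inv_nonneg.2 ht0.le) (hA i j)) k i j
  · rw [Matrix.mul_smul, ← smul_mul, smul_sub, scalar_apply, ← smul_one_eq_diagonal, smul_smul,
      inv_mul_cancel₀ ht0.ne', one_smul, hsum.one_sub_mul_tsum_pow]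

end Neumann

section Perron

variable {n : Type*} [Fintype n]

theorem norm_le_sum_of_nonneg {x : n → ℝ} (hx : ∀ i, 0 ≤ x i) : ‖x‖ ≤ ∑ i, x i :=
  (pi_norm_le_iff_of_nonneg (Finset.sum_nonneg fun i _ => hx i)).2 fun i => by
    rw [Real.norm_of_nonneg (hx i)]
    exact Finset.single_le_sum (fun j _ => hx j) (Finset.mem_univ i)

theorem norm_mulVec_le_of_nonneg {R : Matrix n n ℝ} (hR : ∀ i j, 0 ≤ R i j) (v : n → ℝ) :
    ‖R *ᵥ v‖ ≤ ‖v‖ * ‖R *ᵥ 1‖ := by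
  refine (pi_norm_le_iff_of_nonneg (by positivity)).2 fun i => ?_
  calc ‖(R *ᵥ v) i‖ ≤ ∑ j, R i j * ‖v‖ := by
        refine (norm_sum_le _ _).trans (Finset.sum_le_sum fun j _ => ?_)
        rw [norm_mul, Real.norm_of_nonneg (hR i j)]
        exact mul_le_mul_of_nonneg_left (norm_le_pi_norm v j) (hR i j)
    _ = ‖v‖ * (R *ᵥ 1) i := by simp [mulVec, dotProduct, Finset.sum_mul, mul_comm]
    _ ≤ ‖v‖ * ‖R *ᵥ 1‖ := by
        gcongr
        exact (Real.le_norm_self _).trans (norm_le_pi_norm _ i)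

theorem exists_mem_stdSimplex_mulVec_eq_smul {A : Matrix n n ℝ} {r : ℝ}
    (h : ∀ δ > 0, ∃ x ∈ stdSimplex ℝ n, ‖A *ᵥ x - r • x‖ ≤ δ) :
    ∃ w ∈ stdSimplex ℝ n, A *ᵥ w = r • w := by
  obtain ⟨x, hx, -⟩ := h 1 one_pos
  have hcont : Continuous fun x => ‖A *ᵥ x - r • x‖ := by fun_prop
  obtain ⟨w, hw, hmin⟩ := (isCompact_stdSimplex ℝ n).exists_isMinOn ⟨x, hx⟩ hcont.continuousOn
  refine ⟨w, hw, sub_eq_zero.1 (norm_le_zero_iff.1 (le_of_forall_pos_le_add fun δ hδ => ?_))⟩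
  obtain ⟨x, hx, hδ⟩ := h δ hδ
  simpa using (hmin hx).trans hδ

variable [DecidableEq n] {A R : Matrix n n ℝ} {r t : ℝ}

theorem inv_sub_le_norm_mulVec_one (hR : ∀ i j, 0 ≤ R i j) (hAR : (scalar n t - A) * R = 1)
    {v : n → ℝ} (hv : A *ᵥ v = r • v) (hv0 : v ≠ 0) (hrt : r < t) :
    (t - r)⁻¹ ≤ ‖R *ᵥ 1‖ := by
  have hRv : v = (t - r) • R *ᵥ v := by
    calc v = (R * (scalar n t - A)) *ᵥ v := by rw [mul_eq_one_comm.1 hAR, one_mulVec]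
      _ = (t - r) • R *ᵥ v := by
        rw [← mulVec_mulVec, scalar_sub_mulVec, hv, ← sub_smul, mulVec_smul]
  have hmul : ‖v‖ * 1 ≤ ‖v‖ * ((t - r) * ‖R *ᵥ 1‖) :=
    calc ‖v‖ * 1 = (t - r) * ‖R *ᵥ v‖ := by
          conv_lhs => rw [hRv]
          rw [mul_one, norm_smul, Real.norm_of_nonneg (sub_pos.2 hrt).le]
      _ ≤ (t - r) * (‖v‖ * ‖R *ᵥ 1‖) :=
          mul_le_mul_of_nonneg_left (norm_mulVec_le_of_nonneg hR v) (sub_pos.2 hrt).le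
      _ = ‖v‖ * ((t - r) * ‖R *ᵥ 1‖) := by ring
  exact (inv_le_iff_one_le_mul₀' (sub_pos.2 hrt)).2
    (le_of_mul_le_mul_left hmul (norm_pos_iff.2 hv0))

/-- The normalization of `R *ᵥ 1`, where `R = (t - A)⁻¹`, is an approximate eigenvector for `r`. -/
theorem exists_mem_stdSimplex_norm_mulVec_sub_smul_le (hR : ∀ i j, 0 ≤ R i j)
    (hAR : (scalar n t - A) * R = 1) {v : n → ℝ} (hv : A *ᵥ v = r • v) (hv0 : v ≠ 0)
    (hrt : r < t) : ∃ x ∈ stdSimplex ℝ n, ‖A *ᵥ x - r • x‖ ≤ 2 * (t - r) := by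
  set y := R *ᵥ 1
  have hy : ∀ i, 0 ≤ y i := fun i => Finset.sum_nonneg fun j _ => by simpa using hR i j
  set σ := ∑ i, y i
  have hσ : (t - r)⁻¹ ≤ σ :=
    (inv_sub_le_norm_mulVec_one hR hAR hv hv0 hrt).trans (norm_le_sum_of_nonneg hy)
  have hσ0 : 0 < σ := (inv_pos.2 (sub_pos.2 hrt)).trans_le hσ
  have hAy : A *ᵥ y = t • y - 1 := by
    have : (scalar n t - A) *ᵥ y = 1 := by rw [mulVec_mulVec, hAR, one_mulVec]
    rw [← this, scalar_sub_mulVec, sub_sub_cancel]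
  set x := σ⁻¹ • y
  have hx : x ∈ stdSimplex ℝ n :=
    ⟨fun i => mul_nonneg (inv_nonneg.2 hσ0.le) (hy i), by simp [x, ← Finset.mul_sum, σ, hσ0.ne']⟩
  refine ⟨x, hx, ?_⟩
  have hAx : A *ᵥ x - r • x = (t - r) • x - σ⁻¹ • 1 := by
    simp only [x, mulVec_smul, hAy]
    module
  calc ‖A *ᵥ x - r • x‖ ≤ (t - r) * ‖x‖ + σ⁻¹ * ‖(1 : n → ℝ)‖ := by
        rw [hAx]
        refine (norm_sub_le _ _).trans_eq ?_
        rw [norm_smul (t - r), norm_smul σ⁻¹ (1 : n → ℝ), Real.norm_of_nonneg (sub_pos.2 hrt).le,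
          Real.norm_of_nonneg (inv_nonneg.2 hσ0.le)]
    _ ≤ (t - r) * 1 + (t - r) * 1 := by
        gcongr
        · exact (norm_le_sum_of_nonneg hx.1).trans_eq hx.2
        · exact inv_le_of_inv_le₀ (sub_pos.2 hrt) hσ
        · exact (pi_norm_const_le (1 : ℝ)).trans_eq norm_one
    _ = 2 * (t - r) := by ring

theorem exists_mem_stdSimplex_mulVec_eq_smul_of_resolvent_nonneg
    (hres : ∀ t, r < t → ∃ R : Matrix n n ℝ, (∀ i j, 0 ≤ R i j) ∧ (scalar n t - A) * R = 1)
    (hdet : (scalar n r - A).det = 0) : ∃ w ∈ stdSimplex ℝ n, A *ᵥ w = r • w := by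
  obtain ⟨v, hv0, hv⟩ := exists_mulVec_eq_zero_iff.2 hdet
  have hAv : A *ᵥ v = r • v := by
    rw [scalar_sub_mulVec, sub_eq_zero] at hv
    exact hv.symm
  refine exists_mem_stdSimplex_mulVec_eq_smul fun δ hδ => ?_
  obtain ⟨R, hR, hAR⟩ := hres (r + δ / 2) (by linarith)
  obtain ⟨x, hx, hle⟩ :=
    exists_mem_stdSimplex_norm_mulVec_sub_smul_le hR hAR hAv hv0 (by linarith)
  exact ⟨x, hx, hle.trans_eq (by ring)⟩

end Perron

section CharpolyOfReal

variable {n : Type*} [Fintype n] [DecidableEq n]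

theorem charpoly_map_ofReal (M : Matrix n n ℝ) :
    (M.map (fun x : ℝ => (x : ℂ))).charpoly = M.charpoly.map Complex.ofRealHom :=
  charpoly_map M Complex.ofRealHom

theorem det_scalar_sub_eq_zero_of_charpoly_eq {M : Matrix n n ℝ} {Λ : Multiset ℂ}
    (hcp : (M.map (fun x : ℝ => (x : ℂ))).charpoly = (Λ.map fun z => X - C z).prod) {r : ℝ}
    (hr : (r : ℂ) ∈ Λ) : (scalar n r - M).det = 0 := by
  rw [← eval_charpoly]
  refine IsRoot.of_map (f := Complex.ofRealHom) ?_ Complex.ofReal_injective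
  rw [← charpoly_map_ofReal, hcp]
  exact isRoot_of_mem_roots ((roots_multiset_prod_X_sub_C Λ).symm ▸ hr)

end CharpolyOfReal

theorem realizable_of_charpoly_eq {n : ℕ} {Λ : Multiset ℂ} (A : Matrix (Fin n) (Fin n) ℝ)
    (hA : ∀ i j, 0 ≤ A i j)
    (hcp : (A.map (fun x : ℝ => (x : ℂ))).charpoly = (Λ.map (fun z => X - C z)).prod) :
    Realizable Λ := by
  obtain rfl : n = Multiset.card Λ := by
    simpa [natDegree_multiset_prod_X_sub_C_eq_card] using congrArg natDegree hcp
  exact ⟨A, hA, hcp⟩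

theorem realizable_cons_add_of_mulVec_eq {n : ℕ} {s : Multiset ℂ} {r : ℝ}
    {A : Matrix (Fin n) (Fin n) ℝ} (hA : ∀ i j, 0 ≤ A i j)
    (hcp : (A.map (fun x : ℝ => (x : ℂ))).charpoly = (((r : ℂ) ::ₘ s).map fun z => X - C z).prod)
    {w : Fin n → ℝ} (hw : w ∈ stdSimplex ℝ (Fin n)) (hAw : A *ᵥ w = r • w)
    {ε : ℝ} (hε : 0 ≤ ε) : Realizable (((r : ℂ) + ε) ::ₘ s) := by
  obtain ⟨i, hi⟩ : ∃ i, 0 < w i := by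
    by_contra! h
    have : ∑ i, w i = 0 := Finset.sum_eq_zero fun i _ => le_antisymm (h i) (hw.1 i)
    exact zero_ne_one (this.symm.trans hw.2)
  set u : Fin n → ℝ := Pi.single i (ε / w i)
  have hu : 0 ≤ u := Pi.single_nonneg.2 (div_nonneg hε hi.le)
  have huw : u ⬝ᵥ w = ε := by simp [u, single_dotProduct, hi.ne']
  refine realizable_of_charpoly_eq (A + vecMulVec w u)
    (fun j k => add_nonneg (hA j k) (mul_nonneg (hw.1 j) (hu k))) ?_
  have hB := congrArg (Polynomial.map Complex.ofRealHom) (charpoly_add_vecMulVec hAw u)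
  rw [huw, Polynomial.map_mul, Polynomial.map_mul, ← charpoly_map_ofReal, ← charpoly_map_ofReal,
    hcp, Multiset.map_cons, Multiset.prod_cons] at hB
  rw [Multiset.map_cons, Multiset.prod_cons]
  refine mul_left_cancel₀ (X_sub_C_ne_zero (r : ℂ)) ?_
  simpa [mul_left_comm] using hB

/-- If `{λ1, λ2, ..., λn}` is realizable with Perron root `λ1` (real and dominating
all moduli), then for every real `ε > 0` the multiset `{λ1+ε, λ2,...,λn}` is
realizable. -/
theorem realizable_perron_increase (lam1 : ℂ) (s : Multiset ℂ)
    (hreal : Realizable (lam1 ::ₘ s))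
    (h1 : lam1.im = 0)
    (hperron : ∀ z ∈ lam1 ::ₘ s, ‖z‖ ≤ lam1.re)
    (ε : ℝ) (hε : 0 < ε) :
    Realizable ((lam1 + (ε : ℂ)) ::ₘ s) := by
  obtain ⟨A, hA, hcp⟩ := hreal
  obtain ⟨r, rfl⟩ : ∃ r : ℝ, (r : ℂ) = lam1 := ⟨lam1.re, Complex.ext rfl (by simp [h1])⟩
  simp only [Complex.ofReal_re] at hperron
  have hr : 0 ≤ r := (norm_nonneg _).trans (hperron _ (Multiset.mem_cons_self _ _))
  have hρ := spectralRadius_le_of_charpoly_eq hcp hperron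
  obtain ⟨w, hw, hAw⟩ := exists_mem_stdSimplex_mulVec_eq_smul_of_resolvent_nonneg
    (fun t ht => exists_nonneg_inverse_scalar_sub_of_spectralRadius_lt hA
      (hρ.trans_lt ((ENNReal.ofReal_lt_ofReal_iff_of_nonneg hr).2 ht)))
    (det_scalar_sub_eq_zero_of_charpoly_eq hcp (Multiset.mem_cons_self _ _))
  exact realizable_cons_add_of_mulVec_eq hA hcp hw hAw hε.le

end CPaper
end

section
/- If a finite multiset of real numbers is C-realizable, then it is realizable, i.e. there exists a square matrix with nonnegative real entries whose eigenvalues counted with algebraic multiplicity are exactly the elements of the multiset. -/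
namespace CPaper


/-- One step of the C-realizability rewriting procedure on collections of multisets
of real numbers (rules (a), (b), (c); in rule (c) the second element may be
increased or decreased by ε). -/
inductive StepR : Multiset (Multiset ℝ) → Multiset (Multiset ℝ) → Prop where
  | join (A B : Multiset ℝ) (C : Multiset (Multiset ℝ)) :
      StepR (A ::ₘ B ::ₘ C) ((A + B) ::ₘ C)
  | ruleB (a ε : ℝ) (s : Multiset ℝ) (C : Multiset (Multiset ℝ))
      (hdom : ∀ b ∈ a ::ₘ s, |b| ≤ a) (hε : 0 < ε) :
      StepR ((a ::ₘ s) ::ₘ C) (((a + ε) ::ₘ s) ::ₘ C)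
  | ruleCplus (a b ε : ℝ) (s : Multiset ℝ) (C : Multiset (Multiset ℝ))
      (hdom : ∀ c ∈ a ::ₘ b ::ₘ s, |c| ≤ a) (hε : 0 < ε) :
      StepR ((a ::ₘ b ::ₘ s) ::ₘ C) (((a + ε) ::ₘ (b + ε) ::ₘ s) ::ₘ C)
  | ruleCminus (a b ε : ℝ) (s : Multiset ℝ) (C : Multiset (Multiset ℝ))
      (hdom : ∀ c ∈ a ::ₘ b ::ₘ s, |c| ≤ a) (hε : 0 < ε) :
      StepR ((a ::ₘ b ::ₘ s) ::ₘ C) (((a + ε) ::ₘ (b - ε) ::ₘ s) ::ₘ C)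

/-- A multiset of reals is C-realizable. -/
def CRealizable (Λ : Multiset ℝ) : Prop :=
  ∃ n : ℕ, Relation.ReflTransGen StepR (Multiset.replicate n ({0} : Multiset ℝ)) {Λ}

end CPaper

/-!
Every multiset occurring in a C-realization is the spectrum of a nonnegative matrix whose row sums
all equal the dominant element `λ₁`. For a union, take a block lower-triangular matrix whose
off-diagonal block makes up the difference of the row sums. For rules (b) and (c), perturb `A` to
`A + 𝟙 cᵀ + w dᵀ` with `∑ d = 0`, where `𝟙` is the eigenvector of `λ₁` and `w` is not constant and
satisfies `A w = λ₂ w + γ 𝟙`. Such a `w` exists even when `λ₂ = λ₁`, because `λ₂` is an eigenvalue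
of the map that `A` induces on `ℝⁿ / ℝ𝟙`. The perturbation moves `λ₁` to `λ₁ + ∑ c` and `λ₂` to
`λ₂ + d ⬝ w`, and keeps the rest of the spectrum. If `c` and `d` are supported where `w` attains
its maximum and its minimum, the matrix stays nonnegative whenever `|d ⬝ w| ≤ ∑ c`.
-/

open Polynomial

namespace Matrix

variable {K : Type*} [CommRing K]

theorem charpoly_add_mul_mul_charpoly {n k : Type*} [Fintype n] [DecidableEq n] [Fintype k]
    [DecidableEq k] (A : Matrix n n K) (U : Matrix n k K) (V : Matrix k n K) (D : Matrix k k K)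
    (h : A * U = U * D) :
    (A + U * V).charpoly * D.charpoly = A.charpoly * (D + V * U).charpoly := by
  have hconj : fromBlocks A 0 V (D + V * U) =
      fromBlocks 1 (-U) 0 1 * (fromBlocks (A + U * V) 0 V D * fromBlocks 1 U 0 1) := by
    simp only [fromBlocks_multiply, Matrix.mul_one, Matrix.mul_zero, Matrix.zero_mul,
      add_zero, zero_add, Matrix.one_mul, Matrix.neg_mul, Matrix.add_mul, Matrix.mul_add,
      Matrix.mul_assoc, h]
    congr 1 <;> abel
  have hinv : fromBlocks 1 U 0 1 * fromBlocks 1 (-U) 0 1 = (1 : Matrix (n ⊕ k) (n ⊕ k) K) := by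
    simp [fromBlocks_multiply, fromBlocks_one]
  rw [← charpoly_fromBlocks_zero₁₂, ← charpoly_fromBlocks_zero₁₂, hconj, charpoly_mul_comm,
    Matrix.mul_assoc, hinv, Matrix.mul_one]

theorem charpoly_of_upperTriangular_fin_two [Nontrivial K] (p q r : K) :
    (!![p, q; 0, r]).charpoly = (X - C p) * (X - C r) := by
  rw [charpoly_fin_two, trace_fin_two, det_fin_two]
  simp only [of_apply, cons_val', cons_val_zero, cons_val_one, empty_val', cons_val_fin_one,
    mul_zero, sub_zero, map_add, map_mul]
  ring

theorem charpoly_add_rankTwo_mul [Nontrivial K] {n : Type*} [Fintype n] [DecidableEq n]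
    (A : Matrix n n K) {a b γ : K} (w c d : n → K) (hA : ∀ i, ∑ j, A i j = a)
    (hw : ∀ i, (A *ᵥ w) i = b * w i + γ) (hd : ∑ j, d j = 0) :
    (A + of fun i j => c j + w i * d j).charpoly * ((X - C a) * (X - C b)) =
      A.charpoly * ((X - C (a + ∑ j, c j)) * (X - C (b + d ⬝ᵥ w))) := by
  let U : Matrix n (Fin 2) K := of fun i => ![1, w i]
  let V : Matrix (Fin 2) n K := of ![c, d]
  have hUV : (of fun i j => c j + w i * d j) = U * V := by
    ext i j; simp [U, V, mul_apply, Fin.sum_univ_two]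
  have hAU : A * U = U * !![a, γ; 0, b] := by
    ext i t
    fin_cases t
    · simp [U, mul_apply, Fin.sum_univ_two, hA]
    · have := hw i
      simp only [mulVec, dotProduct] at this
      simp only [U, mul_apply, of_apply, Fin.mk_one, Fin.isValue, cons_val', cons_val_zero,
        cons_val_one, cons_val_fin_one, Fin.sum_univ_two, one_mul, this]
      ring
  have hVU : !![a, γ; 0, b] + V * U = !![a + ∑ j, c j, γ + c ⬝ᵥ w; 0, b + d ⬝ᵥ w] := by
    ext s t
    fin_cases s <;> fin_cases t <;> simp [U, V, vecMul, dotProduct, hd, mul_comm]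
  rw [hUV, ← charpoly_of_upperTriangular_fin_two a γ b, charpoly_add_mul_mul_charpoly A U V _ hAU,
    hVU, charpoly_of_upperTriangular_fin_two]

theorem charpoly_eq_X_sub_C_mul_charpoly_submatrix_succ {n : ℕ}
    (B : Matrix (Fin (n + 1)) (Fin (n + 1)) K) (h : ∀ j : Fin n, B j.succ 0 = 0) :
    B.charpoly = (X - C (B 0 0)) * (B.submatrix Fin.succ Fin.succ).charpoly := by
  have hsub : (charmatrix B).submatrix Fin.succ Fin.succ =
      charmatrix (B.submatrix Fin.succ Fin.succ) := by
    ext j k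
    by_cases hjk : j = k
    · subst hjk; simp
    · rw [submatrix_apply, charmatrix_apply_ne _ _ _ (by simpa using hjk),
        charmatrix_apply_ne _ _ _ hjk, submatrix_apply]
  rw [charpoly, det_succ_column_zero, Fin.sum_univ_succ]
  simp [h, hsub, charpoly]

theorem charpoly_eq_X_sub_C_mul_charpoly_of_rowSum {n : ℕ}
    (A : Matrix (Fin (n + 1)) (Fin (n + 1)) K) {a : K} (hA : ∀ i, ∑ j, A i j = a) :
    A.charpoly = (X - C a) * (of fun j k : Fin n => A j.succ k.succ - A 0 k.succ).charpoly := by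
  -- conjugating by `1 + N` turns the first column into `a • e`
  let f : Fin (n + 1) → K := Fin.cons 0 1
  let e : Fin (n + 1) → K := Pi.single 0 1
  let N := vecMulVec f e
  have hN : (1 + N) * (1 - N) = 1 := by
    simp [N, f, e, add_mul, mul_sub, vecMulVec_mul_vecMulVec]
  let B := (1 - N) * (A * (1 + N))
  have hB : B.charpoly = A.charpoly := by
    rw [charpoly_mul_comm, Matrix.mul_assoc, hN, Matrix.mul_one]
  have hAf : ∀ i, (A *ᵥ f) i = a - A i 0 := by
    intro i
    rw [← hA i, Fin.sum_univ_succ]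
    simp [f, mulVec, dotProduct, Fin.sum_univ_succ]
  have hAN : ∀ i j, (A * (1 + N)) i j = A i j + (a - A i 0) * e j := by
    simp [N, Matrix.mul_add, mul_vecMulVec, vecMulVec_apply, hAf]
  have hBij : ∀ i j, B i j = (A * (1 + N)) i j - f i * (A * (1 + N)) 0 j := by
    simp [B, N, e, Matrix.sub_mul, vecMulVec_mul, vecMulVec_apply, row]
  rw [← hB, charpoly_eq_X_sub_C_mul_charpoly_submatrix_succ B (fun j => by simp [hBij, hAN, f, e])]
  congr 3
  · simp [hBij, hAN, f, e]
  · ext j k; simp [hBij, hAN, f, e]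

/-- `w` lifts an eigenvector for `b` of the map induced by `A` on `K^(n+1) / K • 1`. -/
theorem exists_nonconstant_mulVec_eq_smul_add_const {K : Type*} [Field K] {n : ℕ}
    (A : Matrix (Fin (n + 1)) (Fin (n + 1)) K) {a b : K} {q : K[X]}
    (hA : ∀ i, ∑ j, A i j = a) (hab : A.charpoly = (X - C a) * ((X - C b) * q)) :
    ∃ w : Fin (n + 1) → K, (∃ i j, w i ≠ w j) ∧ ∃ γ, ∀ i, (A *ᵥ w) i = b * w i + γ := by
  set D := of fun j k : Fin n => A j.succ k.succ - A 0 k.succ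
  have hD : D.charpoly = (X - C b) * q := mul_left_cancel₀ (X_sub_C_ne_zero a) <| by
    rw [← charpoly_eq_X_sub_C_mul_charpoly_of_rowSum A hA, hab]
  have hdet : (scalar (Fin n) b - D).det = 0 := by
    rw [← eval_charpoly, hD]; simp
  obtain ⟨v, hv0, hv⟩ := exists_mulVec_eq_zero_iff.mpr hdet
  obtain ⟨k, hk⟩ := Function.ne_iff.mp hv0
  refine ⟨Fin.cons 0 v, ⟨k.succ, 0, by simpa using hk⟩, ∑ k, A 0 k.succ * v k, ?_⟩
  intro i
  induction i using Fin.cases with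
  | zero => simp [mulVec, dotProduct, Fin.sum_univ_succ]
  | succ j =>
    have hj := congrFun hv j
    simp only [D, mulVec, dotProduct, scalar_apply, sub_apply, diagonal_apply, of_apply, sub_mul,
      ite_mul, zero_mul, Finset.sum_sub_distrib, Finset.sum_ite_eq, Finset.mem_univ, ↓reduceIte,
      Pi.zero_apply] at hj
    simp only [mulVec, dotProduct, Fin.sum_univ_succ, Fin.cons_zero, Fin.cons_succ, mul_zero,
      zero_add]
    linear_combination -hj

end Matrix

namespace CPaper

open Matrix

theorem exists_rankTwo_nonneg_perturbation {K ι : Type*} [Field K] [LinearOrder K]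
    [IsStrictOrderedRing K] [Fintype ι] [DecidableEq ι] {w : ι → K}
    (hw : ∃ i j, w i ≠ w j) {ε η : K} (hη : |η| ≤ ε) :
    ∃ c d : ι → K, ∑ j, c j = ε ∧ ∑ j, d j = 0 ∧ d ⬝ᵥ w = η ∧ ∀ i j, 0 ≤ c j + w i * d j := by
  obtain ⟨i₀, j₀, hij⟩ := hw
  have hne : (Finset.univ : Finset ι).Nonempty := ⟨i₀, Finset.mem_univ _⟩
  obtain ⟨p, -, hp⟩ := Finset.exists_max_image Finset.univ w hne
  obtain ⟨q, -, hq⟩ := Finset.exists_min_image Finset.univ w hne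
  have hL : 0 < w p - w q := by
    by_contra! h
    exact hij (by linarith [hp i₀ (by simp), hq i₀ (by simp), hp j₀ (by simp), hq j₀ (by simp)])
  have hpq : p ≠ q := by rintro rfl; simp at hL
  obtain ⟨hη₁, hη₂⟩ := abs_le.mp hη
  set t := η / (w p - w q)
  refine ⟨Pi.single p ((ε - η) / 2 - t * w q) + Pi.single q ((ε + η) / 2 + t * w q),
    Pi.single p t - Pi.single q t, ?_, ?_, ?_, fun i j => ?_⟩
  · simp only [Pi.add_apply, Finset.sum_add_distrib, Finset.sum_pi_single', Finset.mem_univ,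
      ↓reduceIte]
    ring
  · simp [Finset.sum_sub_distrib]
  · rw [sub_dotProduct, single_dotProduct, single_dotProduct, ← mul_sub, div_mul_cancel₀ _ hL.ne']
  · have hs₀ : 0 ≤ (w i - w q) / (w p - w q) := div_nonneg (by linarith [hq i (by simp)]) hL.le
    have hs₁ : (w i - w q) / (w p - w q) ≤ 1 := (div_le_one hL).mpr (by linarith [hp i (by simp)])
    have ht : t * (w i - w q) = η * ((w i - w q) / (w p - w q)) := by ring
    have hεη₁ : 0 ≤ ε - η := by linarith
    have hεη₂ : 0 ≤ ε + η := by linarith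
    -- for `j = p, q` the entry is a convex combination of `(ε - η) / 2` and `(ε + η) / 2`
    by_cases hjp : j = p
    · subst hjp
      simp only [Pi.add_apply, Pi.sub_apply, Pi.single_eq_same, Pi.single_eq_of_ne hpq, add_zero,
        sub_zero]
      nlinarith [mul_nonneg (sub_nonneg.mpr hs₁) hεη₁, mul_nonneg hs₀ hεη₂]
    by_cases hjq : j = q
    · subst hjq
      simp only [Pi.add_apply, Pi.sub_apply, Pi.single_eq_same, Pi.single_eq_of_ne hjp, zero_add,
        zero_sub]
      nlinarith [mul_nonneg (sub_nonneg.mpr hs₁) hεη₂, mul_nonneg hs₀ hεη₁]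
    · simp [hjp, hjq]

def RealizableWithRowSum (Λ : Multiset ℝ) (r : ℝ) : Prop :=
  ∃ A : Matrix (Fin Λ.card) (Fin Λ.card) ℝ, (∀ i j, 0 ≤ A i j) ∧
    A.charpoly = (Λ.map fun x => X - C x).prod ∧ ∀ i, ∑ j, A i j = r

namespace RealizableWithRowSum

variable {Λ Λ₁ Λ₂ s : Multiset ℝ} {r a b ε η : ℝ}

theorem of_matrix {ι : Type*} [Fintype ι] [DecidableEq ι] (A : Matrix ι ι ℝ)
    (hA : ∀ i j, 0 ≤ A i j) (hchar : A.charpoly = (Λ.map fun x => X - C x).prod)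
    (hrow : ∀ i, ∑ j, A i j = r) : RealizableWithRowSum Λ r := by
  have hcard : Fintype.card ι = Λ.card := by
    rw [← charpoly_natDegree_eq_dim A, hchar, natDegree_multiset_prod_X_sub_C_eq_card]
  let e := Fintype.equivFinOfCardEq hcard
  refine ⟨reindex e e A, fun i j => hA _ _, by rw [charpoly_reindex, hchar], fun i => ?_⟩
  simpa [Equiv.sum_comp e.symm (A (e.symm i))] using hrow (e.symm i)

theorem realizable (h : RealizableWithRowSum Λ r) : Realizable (Λ.map fun x : ℝ => (x : ℂ)) := by
  obtain ⟨A, hA, hchar, -⟩ := h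
  let e := finCongr (Multiset.card_map (fun x : ℝ => (x : ℂ)) Λ).symm
  refine ⟨reindex e e A, fun i j => hA _ _, ?_⟩
  rw [show (reindex e e A).map (fun x : ℝ => (x : ℂ)) = reindex e e (A.map (algebraMap ℝ ℂ))
    from rfl, charpoly_reindex, charpoly_map, hchar, Polynomial.map_multiset_prod,
    Multiset.map_map, Multiset.map_map]
  simp

theorem singleton_zero : RealizableWithRowSum {0} 0 :=
  of_matrix (0 : Matrix (Fin 1) (Fin 1) ℝ) (fun _ _ => le_rfl) (by simp) (by simp)

theorem add (h₁ : RealizableWithRowSum Λ₁ a) (h₂ : RealizableWithRowSum Λ₂ b) (hΛ₁ : Λ₁ ≠ 0)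
    (hba : b ≤ a) : RealizableWithRowSum (Λ₁ + Λ₂) a := by
  obtain ⟨A₁, hA₁, hchar₁, hrow₁⟩ := h₁
  obtain ⟨A₂, hA₂, hchar₂, hrow₂⟩ := h₂
  have hcard : (Λ₁.card : ℝ) ≠ 0 := by simpa using hΛ₁
  refine of_matrix (fromBlocks A₁ 0 (of fun _ _ => (a - b) / Λ₁.card) A₂) ?_ ?_ ?_
  · rintro (i | i) (j | j)
    exacts [hA₁ i j, le_rfl, div_nonneg (sub_nonneg.mpr hba) (Nat.cast_nonneg _), hA₂ i j]
  · rw [charpoly_fromBlocks_zero₁₂, hchar₁, hchar₂, Multiset.map_add, Multiset.prod_add]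
  · rintro (i | i)
    · simp [hrow₁]
    · simp [hrow₂, mul_div_cancel₀ _ hcard]

theorem cons_add (h : RealizableWithRowSum (a ::ₘ s) a) (hε : 0 ≤ ε) :
    RealizableWithRowSum ((a + ε) ::ₘ s) (a + ε) := by
  rw [RealizableWithRowSum, Multiset.card_cons] at h
  obtain ⟨A, hA, hchar, hrow⟩ := h
  have key := charpoly_add_rankTwo_mul A (b := 0) (γ := 0) 0 (Pi.single 0 ε) 0 hrow
    (by simp) (by simp)
  simp only [Pi.zero_apply, mul_zero, add_zero, zero_dotProduct] at key
  refine of_matrix (A + of fun _ j => Pi.single 0 ε j)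
    (fun i j => add_nonneg (hA i j) (by simp [Pi.single_apply, apply_ite, hε])) ?_ (fun i => ?_)
  · refine mul_right_cancel₀ (mul_ne_zero (X_sub_C_ne_zero a) (X_sub_C_ne_zero 0)) ?_
    rw [key, hchar]
    simp only [Multiset.map_cons, Multiset.prod_cons, Finset.sum_pi_single', Finset.mem_univ,
      ↓reduceIte, map_add, map_zero, sub_zero]
    ring
  · simp [Finset.sum_add_distrib, hrow]

theorem cons_add_cons_add (h : RealizableWithRowSum (a ::ₘ b ::ₘ s) a) (hη : |η| ≤ ε) :
    RealizableWithRowSum ((a + ε) ::ₘ (b + η) ::ₘ s) (a + ε) := by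
  rw [RealizableWithRowSum, Multiset.card_cons] at h
  obtain ⟨A, hA, hchar, hrow⟩ := h
  obtain ⟨w, hw, γ, hwγ⟩ := exists_nonconstant_mulVec_eq_smul_add_const A hrow
    (b := b) (q := (s.map fun x => X - C x).prod) (by simp [hchar])
  obtain ⟨c, d, hc, hd, hdw, hcd⟩ := exists_rankTwo_nonneg_perturbation hw hη
  have key := charpoly_add_rankTwo_mul A w c d hrow hwγ hd
  refine of_matrix (A + of fun i j => c j + w i * d j) (fun i j => add_nonneg (hA i j) (hcd i j))
    ?_ (fun i => ?_)
  · refine mul_right_cancel₀ (mul_ne_zero (X_sub_C_ne_zero a) (X_sub_C_ne_zero b)) ?_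
    rw [key, hchar, hc, hdw]
    simp only [Multiset.map_cons, Multiset.prod_cons]
    ring
  · simp [Finset.sum_add_distrib, ← Finset.mul_sum, hrow, hc, hd]

end RealizableWithRowSum

def PerronRealizable (Λ : Multiset ℝ) : Prop :=
  ∃ a ∈ Λ, (∀ b ∈ Λ, |b| ≤ a) ∧ RealizableWithRowSum Λ a

namespace PerronRealizable

variable {Λ Λ₁ Λ₂ s : Multiset ℝ} {a b ε η : ℝ}

theorem realizableWithRowSum (h : PerronRealizable Λ) (ha : a ∈ Λ) (hdom : ∀ b ∈ Λ, |b| ≤ a) :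
    RealizableWithRowSum Λ a := by
  obtain ⟨a', ha', hdom', h⟩ := h
  have : a' = a := le_antisymm ((le_abs_self a').trans (hdom a' ha'))
    ((le_abs_self a).trans (hdom' a ha))
  rwa [this] at h

theorem singleton_zero : PerronRealizable {0} :=
  ⟨0, by simp, by simp, RealizableWithRowSum.singleton_zero⟩

theorem add (h₁ : PerronRealizable Λ₁) (h₂ : PerronRealizable Λ₂) :
    PerronRealizable (Λ₁ + Λ₂) := by
  obtain ⟨a₁, ha₁, hdom₁, hr₁⟩ := h₁
  obtain ⟨a₂, ha₂, hdom₂, hr₂⟩ := h₂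
  wlog hle : a₂ ≤ a₁ generalizing Λ₁ Λ₂ a₁ a₂
  · simpa [add_comm] using this a₂ ha₂ hdom₂ hr₂ a₁ ha₁ hdom₁ hr₁ (le_of_not_ge hle)
  refine ⟨a₁, Multiset.mem_add.mpr (Or.inl ha₁), fun x hx => ?_,
    hr₁.add hr₂ (by rintro rfl; simp at ha₁) hle⟩
  rcases Multiset.mem_add.mp hx with hx | hx
  exacts [hdom₁ x hx, (hdom₂ x hx).trans hle]

theorem cons_add (h : PerronRealizable (a ::ₘ s)) (hdom : ∀ x ∈ a ::ₘ s, |x| ≤ a)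
    (hε : 0 ≤ ε) : PerronRealizable ((a + ε) ::ₘ s) := by
  have ha : 0 ≤ a := (abs_nonneg a).trans (hdom a (Multiset.mem_cons_self a s))
  refine ⟨a + ε, Multiset.mem_cons_self _ _, ?_,
    (h.realizableWithRowSum (Multiset.mem_cons_self a s) hdom).cons_add hε⟩
  simp only [Multiset.forall_mem_cons] at hdom ⊢
  exact ⟨(abs_of_nonneg (by linarith)).le, fun x hx => (hdom.2 x hx).trans (by linarith)⟩

theorem cons_add_cons_add (h : PerronRealizable (a ::ₘ b ::ₘ s))
    (hdom : ∀ x ∈ a ::ₘ b ::ₘ s, |x| ≤ a) (hη : |η| ≤ ε) :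
    PerronRealizable ((a + ε) ::ₘ (b + η) ::ₘ s) := by
  have hε : 0 ≤ ε := (abs_nonneg η).trans hη
  refine ⟨a + ε, Multiset.mem_cons_self _ _, ?_,
    (h.realizableWithRowSum (Multiset.mem_cons_self _ _) hdom).cons_add_cons_add hη⟩
  simp only [Multiset.forall_mem_cons] at hdom ⊢
  have ha : 0 ≤ a := (abs_nonneg a).trans hdom.1
  refine ⟨(abs_of_nonneg (by linarith)).le, (abs_add_le b η).trans (by linarith),
    fun x hx => (hdom.2.2 x hx).trans (by linarith)⟩

end PerronRealizable

theorem StepR.perronRealizable {C C' : Multiset (Multiset ℝ)} (hstep : StepR C C')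
    (h : ∀ Λ ∈ C, PerronRealizable Λ) : ∀ Λ ∈ C', PerronRealizable Λ := by
  cases hstep with
  | join =>
    simp only [Multiset.forall_mem_cons] at h ⊢
    exact ⟨h.1.add h.2.1, h.2.2⟩
  | ruleB _ _ _ _ hdom hε =>
    simp only [Multiset.forall_mem_cons] at h ⊢
    exact ⟨h.1.cons_add hdom hε.le, h.2⟩
  | ruleCplus _ _ _ _ _ hdom hε =>
    simp only [Multiset.forall_mem_cons] at h ⊢
    exact ⟨h.1.cons_add_cons_add hdom (abs_of_pos hε).le, h.2⟩
  | ruleCminus _ _ ε _ _ hdom hε =>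
    simp only [Multiset.forall_mem_cons, sub_eq_add_neg] at h ⊢
    exact ⟨h.1.cons_add_cons_add hdom (by rw [abs_neg, abs_of_pos hε]), h.2⟩

theorem perronRealizable_of_reflTransGen {n : ℕ} {C : Multiset (Multiset ℝ)}
    (h : Relation.ReflTransGen StepR (Multiset.replicate n {0}) C) :
    ∀ Λ ∈ C, PerronRealizable Λ := by
  induction h with
  | refl =>
    intro Λ hΛ
    rw [Multiset.eq_of_mem_replicate hΛ]
    exact PerronRealizable.singleton_zero
  | tail _ hstep ih => exact hstep.perronRealizable ih

/-- If a finite multiset of real numbers is C-realizable, then it is realizable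
by a nonnegative matrix. -/
theorem realizable_of_CRealizable (Λ : Multiset ℝ) (h : CRealizable Λ) :
    Realizable (Λ.map fun x : ℝ => (x : ℂ)) := by
  obtain ⟨n, hn⟩ := h
  obtain ⟨a, -, -, hΛ⟩ := perronRealizable_of_reflTransGen hn Λ (Multiset.mem_singleton_self Λ)
  exact hΛ.realizable

end CPaper
end
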